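/- arXiv:1708.04727 — 6 statements merged into one kernel-verified Lean document; each statement's English description precedes it below -/
import Mathlib

section
/- The network distance dN(X,Y) := (1/2) inf over correspondences R of dis(R) satisfies the triangle inequality: for all networks X, Y, Z, dN(X,Z) ≤ dN(X,Y) + dN(Y,Z). -/
open scoped ENNReal
open Function

/-- A correspondence between `X` and `Y`: a relation with full projections. -/
def IsCorrespondence {X Y : Type*} (R : Set (X × Y)) : Prop :=
  (∀ x : X, ∃ y : Y, (x, y) ∈ R) ∧ (∀ y : Y, ∃ x : X, (x, y) ∈ R)

/-- Distortion of a relation between two networks. -/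
noncomputable def dis {X Y : Type*} (ωX : X → X → ℝ) (ωY : Y → Y → ℝ)
    (R : Set (X × Y)) : ℝ≥0∞ :=
  ⨆ p ∈ R, ⨆ q ∈ R, (‖ωX p.1 q.1 - ωY p.2 q.2‖₊ : ℝ≥0∞)

/-- The network distance. -/
noncomputable def dN {X Y : Type*} (ωX : X → X → ℝ) (ωY : Y → Y → ℝ) : ℝ≥0∞ :=
  (1/2) * ⨅ R ∈ {R : Set (X × Y) | IsCorrespondence R}, dis ωX ωY R

/-! Composing correspondences `R ⊆ X × Y` and `S ⊆ Y × Z` gives a correspondence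
`R ○ S ⊆ X × Z`, and routing every comparison through an intermediate pair of points of `Y`
shows `dis (R ○ S) ≤ dis R + dis S`; taking infima over `R` and `S` gives the triangle inequality. -/

open scoped SetRel

theorem IsCorrespondence.comp {X Y Z : Type*} {R : Set (X × Y)} {S : Set (Y × Z)}
    (hR : IsCorrespondence R) (hS : IsCorrespondence S) : IsCorrespondence (R ○ S) := by
  constructor
  · intro x
    obtain ⟨y, hxy⟩ := hR.1 x
    obtain ⟨z, hyz⟩ := hS.1 y
    exact ⟨z, y, hxy, hyz⟩
  · intro z
    obtain ⟨y, hyz⟩ := hS.2 z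
    obtain ⟨x, hxy⟩ := hR.2 y
    exact ⟨x, y, hxy, hyz⟩

theorem edist_le_dis {X Y : Type*} (ωX : X → X → ℝ) (ωY : Y → Y → ℝ) {R : Set (X × Y)}
    {p q : X × Y} (hp : p ∈ R) (hq : q ∈ R) :
    edist (ωX p.1 q.1) (ωY p.2 q.2) ≤ dis ωX ωY R := by
  rw [edist_eq_enorm_sub]
  exact le_iSup₂_of_le p hp (le_iSup₂_of_le q hq le_rfl)

theorem dis_comp_le {X Y Z : Type*} (ωX : X → X → ℝ) (ωY : Y → Y → ℝ) (ωZ : Z → Z → ℝ)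
    (R : Set (X × Y)) (S : Set (Y × Z)) :
    dis ωX ωZ (R ○ S) ≤ dis ωX ωY R + dis ωY ωZ S := by
  refine iSup₂_le fun ⟨x, z⟩ ⟨y, hxy, hyz⟩ => iSup₂_le fun ⟨x', z'⟩ ⟨y', hxy', hyz'⟩ => ?_
  change ‖ωX x x' - ωZ z z'‖ₑ ≤ _
  rw [← edist_eq_enorm_sub]
  calc edist (ωX x x') (ωZ z z')
      ≤ edist (ωX x x') (ωY y y') + edist (ωY y y') (ωZ z z') := edist_triangle _ _ _
    _ ≤ dis ωX ωY R + dis ωY ωZ S :=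
      add_le_add (edist_le_dis ωX ωY hxy hxy') (edist_le_dis ωY ωZ hyz hyz')

theorem dN_triangle {X Y Z : Type*} (ωX : X → X → ℝ) (ωY : Y → Y → ℝ) (ωZ : Z → Z → ℝ) :
    dN ωX ωZ ≤ dN ωX ωY + dN ωY ωZ := by
  have hinf : ⨅ T ∈ {T : Set (X × Z) | IsCorrespondence T}, dis ωX ωZ T ≤
      (⨅ R ∈ {R : Set (X × Y) | IsCorrespondence R}, dis ωX ωY R) +
        ⨅ S ∈ {S : Set (Y × Z) | IsCorrespondence S}, dis ωY ωZ S :=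
    ENNReal.le_iInf₂_add_iInf₂ fun R hR S hS =>
      (iInf₂_le (R ○ S) (hR.comp hS)).trans (dis_comp_le ωX ωY ωZ R S)
  unfold dN
  rw [← mul_add]
  exact mul_le_mul_right hinf _
end

section
/- Two networks X and Y satisfy dN(X,Y) = 0 if and only if they are Type II weakly isomorphic, i.e., for every ε > 0 there is a set Z with surjections φX : Z → X and φY : Z → Y such that |ωX(φX(z),φX(z')) − ωY(φY(z),φY(z'))| < ε for all z,z' ∈ Z. -/
open scoped ENNReal
open Function

universe u

/-!
A correspondence `R` is the same thing as a type `Z = R` with the two projections, which are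
surjective exactly because `R` has full projections; conversely surjections `φX`, `φY` from `Z`
give the correspondence `range (φX, φY)`. In both directions the distortion of the relation is
the supremum of `|ωX (φX z) (φX z') - ωY (φY z) (φY z')|` over `Z`.
-/

lemma ENNReal.eq_zero_iff_forall_lt_ofReal {a : ℝ≥0∞} :
    a = 0 ↔ ∀ ε : ℝ, 0 < ε → a < ENNReal.ofReal ε := by
  refine ⟨fun ha ε hε => ha ▸ ENNReal.ofReal_pos.2 hε, fun h => ?_⟩
  refine nonpos_iff_eq_zero.1 <| ENNReal.le_of_forall_pos_le_add fun ε hε _ => ?_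
  simpa using (h ε hε).le

section Network

variable {X Y : Type*} {ωX : X → X → ℝ} {ωY : Y → Y → ℝ}

lemma ofReal_abs_sub_le_dis {R : Set (X × Y)} {p q : X × Y} (hp : p ∈ R) (hq : q ∈ R) :
    ENNReal.ofReal |ωX p.1 q.1 - ωY p.2 q.2| ≤ dis ωX ωY R := by
  rw [← Real.norm_eq_abs, ← coe_nnnorm, ENNReal.ofReal_coe_nnreal]
  exact le_iSup₂_of_le p hp <| le_iSup₂_of_le q hq le_rfl

lemma dis_range_le_ofReal {Z : Type*} {φX : Z → X} {φY : Z → Y} {ε : ℝ}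
    (h : ∀ z z', |ωX (φX z) (φX z') - ωY (φY z) (φY z')| ≤ ε) :
    dis ωX ωY (Set.range fun z => (φX z, φY z)) ≤ ENNReal.ofReal ε := by
  refine iSup₂_le ?_
  rintro _ ⟨z, rfl⟩
  refine iSup₂_le ?_
  rintro _ ⟨z', rfl⟩
  rw [← ENNReal.ofReal_coe_nnreal, coe_nnnorm, Real.norm_eq_abs]
  exact ENNReal.ofReal_le_ofReal (h z z')

lemma IsCorrespondence.surjective_fst {R : Set (X × Y)} (hR : IsCorrespondence R) :
    Surjective fun z : R => z.1.1 := fun x =>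
  let ⟨y, hy⟩ := hR.1 x
  ⟨⟨(x, y), hy⟩, rfl⟩

lemma IsCorrespondence.surjective_snd {R : Set (X × Y)} (hR : IsCorrespondence R) :
    Surjective fun z : R => z.1.2 := fun y =>
  let ⟨x, hx⟩ := hR.2 y
  ⟨⟨(x, y), hx⟩, rfl⟩

lemma isCorrespondence_range {Z : Type*} {φX : Z → X} {φY : Z → Y}
    (hX : Surjective φX) (hY : Surjective φY) :
    IsCorrespondence (Set.range fun z => (φX z, φY z)) := by
  constructor
  · intro x
    obtain ⟨z, rfl⟩ := hX x
    exact ⟨φY z, z, rfl⟩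
  · intro y
    obtain ⟨z, rfl⟩ := hY y
    exact ⟨φX z, z, rfl⟩

variable (ωX ωY) in
lemma dN_eq_zero_iff_forall_exists_dis_lt : dN ωX ωY = 0 ↔
    ∀ ε : ℝ, 0 < ε → ∃ R : Set (X × Y), IsCorrespondence R ∧ dis ωX ωY R < ENNReal.ofReal ε := by
  rw [dN, mul_eq_zero, or_iff_right (by norm_num), ENNReal.eq_zero_iff_forall_lt_ofReal]
  simp only [iInf_lt_iff, Set.mem_ofPred_eq, exists_prop]

end Network

theorem dN_eq_zero_iff_typeII {X Y : Type u} (ωX : X → X → ℝ) (ωY : Y → Y → ℝ) :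
    dN ωX ωY = 0 ↔
      ∀ ε : ℝ, 0 < ε → ∃ (Z : Type u) (φX : Z → X) (φY : Z → Y),
        Surjective φX ∧ Surjective φY ∧
        ∀ z z' : Z, |ωX (φX z) (φX z') - ωY (φY z) (φY z')| < ε := by
  rw [dN_eq_zero_iff_forall_exists_dis_lt]
  constructor
  · intro h ε hε
    obtain ⟨R, hR, hdis⟩ := h ε hε
    refine ⟨R, fun z => z.1.1, fun z => z.1.2, hR.surjective_fst, hR.surjective_snd, fun z z' => ?_⟩
    exact (ENNReal.ofReal_lt_ofReal_iff hε).1 ((ofReal_abs_sub_le_dis z.2 z'.2).trans_lt hdis)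
  · intro h ε hε
    obtain ⟨Z, φX, φY, hX, hY, hclose⟩ := h (ε / 2) (half_pos hε)
    refine ⟨_, isCorrespondence_range hX hY, ?_⟩
    calc dis ωX ωY (Set.range fun z => (φX z, φY z)) ≤ ENNReal.ofReal (ε / 2) :=
          dis_range_le_ofReal fun z z' => (hclose z z').le
      _ < ENNReal.ofReal ε := (ENNReal.ofReal_lt_ofReal_iff hε).2 (half_lt_self hε)
end

section
/- Type II weak isomorphism is transitive: if for every ε>0 there exist a set P and surjections φA : P → A, φB : P → B with |ωA(φA(p),φA(p')) − ωB(φB(p),φB(p'))| < ε for all p,p'∈P, and similarly for B and C, then the same holds for A and C. -/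
/-!
Glue the two correspondences along `B`: on the fibre product `P ×_B S` of `φB` and `ψB`, the
maps to `A` and to `C` are still surjective, and for any two points the triangle inequality
through their common image in `B` bounds the distortion by the sum of the two distortions.
-/

open Function

universe u

namespace Function

variable {X Y Z : Type*} {f : X → Y} {g : Z → Y}

theorem Surjective.pullback_fst (hg : Surjective g) : Surjective (Pullback.fst : f.Pullback g → X) :=
  fun x ↦
    let ⟨z, hz⟩ := hg (f x)
    ⟨⟨(x, z), hz.symm⟩, rfl⟩

theorem Surjective.pullback_snd (hf : Surjective f) : Surjective (Pullback.snd : f.Pullback g → Z) :=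
  fun z ↦
    let ⟨x, hx⟩ := hf (g z)
    ⟨⟨(x, z), hx⟩, rfl⟩

end Function

section Correspondence

variable {X Y Z : Type*}

def IsCorrespondenceWithin (ωX : X → X → ℝ) (ωY : Y → Y → ℝ) (φX : Z → X) (φY : Z → Y)
    (ε : ℝ) : Prop :=
  Surjective φX ∧ Surjective φY ∧ ∀ z z' : Z, |ωX (φX z) (φX z') - ωY (φY z) (φY z')| < ε

variable {A B C P S : Type*} {ωA : A → A → ℝ} {ωB : B → B → ℝ} {ωC : C → C → ℝ}
  {φA : P → A} {φB : P → B} {ψB : S → B} {ψC : S → C} {ε δ : ℝ}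

theorem IsCorrespondenceWithin.pullback (hφ : IsCorrespondenceWithin ωA ωB φA φB ε)
    (hψ : IsCorrespondenceWithin ωB ωC ψB ψC δ) :
    IsCorrespondenceWithin ωA ωC (φA ∘ Pullback.fst : φB.Pullback ψB → A)
      (ψC ∘ Pullback.snd) (ε + δ) := by
  obtain ⟨hφA, hφB, hφ⟩ := hφ
  obtain ⟨hψB, hψC, hψ⟩ := hψ
  refine ⟨hφA.comp hψB.pullback_fst, hψC.comp hφB.pullback_snd, ?_⟩
  rintro ⟨⟨p, s⟩, hps⟩ ⟨⟨p', s'⟩, hps'⟩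
  have hA : |ωA (φA p) (φA p') - ωB (ψB s) (ψB s')| < ε := by
    simpa only [hps, hps'] using hφ p p'
  calc |ωA (φA p) (φA p') - ωC (ψC s) (ψC s')|
      ≤ |ωA (φA p) (φA p') - ωB (ψB s) (ψB s')| + |ωB (ψB s) (ψB s') - ωC (ψC s) (ψC s')| :=
        abs_sub_le _ _ _
    _ < ε + δ := add_lt_add hA (hψ s s')

end Correspondence

theorem typeII_trans {A B C : Type u}
    (ωA : A → A → ℝ) (ωB : B → B → ℝ) (ωC : C → C → ℝ)
    (hAB : ∀ ε : ℝ, 0 < ε → ∃ (P : Type u) (φA : P → A) (φB : P → B),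
      Surjective φA ∧ Surjective φB ∧
      ∀ p p' : P, |ωA (φA p) (φA p') - ωB (φB p) (φB p')| < ε)
    (hBC : ∀ ε : ℝ, 0 < ε → ∃ (S : Type u) (ψB : S → B) (ψC : S → C),
      Surjective ψB ∧ Surjective ψC ∧
      ∀ s s' : S, |ωB (ψB s) (ψB s') - ωC (ψC s) (ψC s')| < ε) :
    ∀ ε : ℝ, 0 < ε → ∃ (T : Type u) (χA : T → A) (χC : T → C),
      Surjective χA ∧ Surjective χC ∧
      ∀ t t' : T, |ωA (χA t) (χA t') - ωC (χC t) (χC t')| < ε := by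
  intro ε hε
  obtain ⟨P, φA, φB, hφ⟩ := hAB (ε / 2) (half_pos hε)
  obtain ⟨S, ψB, ψC, hψ⟩ := hBC (ε / 2) (half_pos hε)
  have hglued := IsCorrespondenceWithin.pullback hφ hψ
  rw [add_halves] at hglued
  exact ⟨_, _, _, hglued⟩
end

section
/- The trace invariant is 2-Lipschitz: for finite networks X and Y, the Hausdorff distance in ℝ between tr(X) = {ωX(x,x) : x ∈ X} and tr(Y) = {ωY(y,y) : y ∈ Y} is at most 2 dN(X,Y). -/
open scoped ENNReal
open Function

/-! A correspondence matches every diagonal entry `ωX x x` with some `ωY y y` at distance at most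
the distortion (take both pairs of the distortion equal to `(x, y)`), and vice versa; so the
Hausdorff distance between the traces is at most the distortion of every correspondence, which
is `2 dN`. -/

section Networks

variable {X Y α : Type*}

lemma IsCorrespondence.hausdorffEDist_range_le [PseudoEMetricSpace α] {R : Set (X × Y)}
    (hR : IsCorrespondence R) {f : X → α} {g : Y → α} {d : ℝ≥0∞}
    (hd : ∀ x y, (x, y) ∈ R → edist (f x) (g y) ≤ d) :
    Metric.hausdorffEDist (Set.range f) (Set.range g) ≤ d := by
  refine Metric.hausdorffEDist_le_of_infEDist ?_ ?_
  · rintro _ ⟨x, rfl⟩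
    obtain ⟨y, hxy⟩ := hR.1 x
    exact (Metric.infEDist_le_edist_of_mem (Set.mem_range_self y)).trans (hd x y hxy)
  · rintro _ ⟨y, rfl⟩
    obtain ⟨x, hxy⟩ := hR.2 y
    exact (Metric.infEDist_le_edist_of_mem (Set.mem_range_self x)).trans
      (edist_comm (g y) (f x) ▸ hd x y hxy)

lemma edist_diag_le_dis (ωX : X → X → ℝ) (ωY : Y → Y → ℝ) {R : Set (X × Y)} {x : X} {y : Y}
    (hxy : (x, y) ∈ R) : edist (ωX x x) (ωY y y) ≤ dis ωX ωY R := by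
  rw [edist_eq_enorm_sub]
  exact le_iSup₂_of_le (x, y) hxy <|
    le_iSup₂ (f := fun q (_ : q ∈ R) => (‖ωX x q.1 - ωY y q.2‖₊ : ℝ≥0∞)) (x, y) hxy

lemma two_mul_dN (ωX : X → X → ℝ) (ωY : Y → Y → ℝ) :
    2 * dN ωX ωY = ⨅ R ∈ {R : Set (X × Y) | IsCorrespondence R}, dis ωX ωY R := by
  rw [dN, ← mul_assoc, one_div, ENNReal.mul_inv_cancel two_ne_zero ENNReal.ofNat_ne_top, one_mul]

lemma setOf_exists_eq_diag (ω : X → X → ℝ) :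
    {r : ℝ | ∃ x : X, r = ω x x} = Set.range fun x => ω x x := by
  ext
  simp [eq_comm]

end Networks

theorem trace_lipschitz_general {X Y : Type*} (ωX : X → X → ℝ) (ωY : Y → Y → ℝ) :
    EMetric.hausdorffEdist {r : ℝ | ∃ x : X, r = ωX x x}
      {r : ℝ | ∃ y : Y, r = ωY y y} ≤ 2 * dN ωX ωY := by
  rw [setOf_exists_eq_diag, setOf_exists_eq_diag, two_mul_dN]
  exact le_iInf₂ fun R hR => hR.hausdorffEDist_range_le fun _ _ => edist_diag_le_dis ωX ωY

theorem trace_lipschitz {X Y : Type*} [Fintype X] [Fintype Y]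
    [Nonempty X] [Nonempty Y] (ωX : X → X → ℝ) (ωY : Y → Y → ℝ) :
    EMetric.hausdorffEdist {r : ℝ | ∃ x : X, r = ωX x x}
      {r : ℝ | ∃ y : Y, r = ωY y y} ≤ 2 * dN ωX ωY :=
  trace_lipschitz_general ωX ωY
end

section
/- For finite networks X and Y and any functions fX : X → ℝ, fY : Y → ℝ, the Hausdorff distance in ℝ between the images fX(X) and fY(Y) equals the infimum over correspondences R ⊆ X×Y of sup_{(x,y)∈R} |fX(x) − fY(y)|. -/
open scoped ENNReal
open Function

/-!
A correspondence `R` matches every value `f x` with some `g y` at distance at most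
`sup_{(x,y) ∈ R} edist (f x) (g y)`, so the Hausdorff distance of the images is at most this cost.
Conversely, when the images are finite, every point of one image has a nearest point in the
other, at distance at most the Hausdorff distance `H`; hence the pairs at distance `≤ H` form a
correspondence of cost `≤ H`.
-/

open Metric Set

section
variable {α X Y : Type*} [PseudoEMetricSpace α] (f : X → α) (g : Y → α)

theorem hausdorffEDist_range_le_of_isCorrespondence {R : Set (X × Y)}
    (hR : IsCorrespondence R) :
    hausdorffEDist (range f) (range g) ≤ ⨆ p ∈ R, edist (f p.1) (g p.2) := by
  obtain ⟨hX, hY⟩ := hR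
  refine hausdorffEDist_le_of_mem_edist ?_ ?_
  · rintro _ ⟨x, rfl⟩
    obtain ⟨y, hy⟩ := hX x
    exact ⟨g y, mem_range_self y, le_iSup₂_of_le (x, y) hy le_rfl⟩
  · rintro _ ⟨y, rfl⟩
    obtain ⟨x, hx⟩ := hY y
    exact ⟨f x, mem_range_self x, le_iSup₂_of_le (x, y) hx (edist_comm _ _).le⟩

theorem exists_edist_le_hausdorffEDist_range [Finite Y]
    (hfin : hausdorffEDist (range f) (range g) ≠ ⊤) (x : X) :
    ∃ y, edist (f x) (g y) ≤ hausdorffEDist (range f) (range g) := by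
  have hne : (range g).Nonempty := nonempty_of_hausdorffEDist_ne_top ⟨f x, mem_range_self x⟩ hfin
  obtain ⟨_, ⟨y, rfl⟩, hy⟩ := (finite_range g).isCompact.exists_infEDist_eq_edist hne (f x)
  exact ⟨y, hy ▸ infEDist_le_hausdorffEDist_of_mem (mem_range_self x)⟩

theorem isCorrespondence_edist_le_hausdorffEDist_range [Finite X] [Finite Y]
    (hfin : hausdorffEDist (range f) (range g) ≠ ⊤) :
    IsCorrespondence {p : X × Y | edist (f p.1) (g p.2) ≤ hausdorffEDist (range f) (range g)} := by
  refine ⟨exists_edist_le_hausdorffEDist_range f g hfin, fun y => ?_⟩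
  rw [hausdorffEDist_comm] at hfin ⊢
  obtain ⟨x, hx⟩ := exists_edist_le_hausdorffEDist_range g f hfin y
  exact ⟨x, by rwa [edist_comm] at hx⟩

end

theorem hausdorff_eq_inf_corr_general {X Y : Type*} [Fintype X] [Fintype Y]
    (fX : X → ℝ) (fY : Y → ℝ) :
    EMetric.hausdorffEdist (Set.range fX) (Set.range fY)
      = ⨅ R ∈ {R : Set (X × Y) | IsCorrespondence R},
          ⨆ p ∈ R, edist (fX p.1) (fY p.2) := by
  change hausdorffEDist (range fX) (range fY) = _
  refine le_antisymm (le_iInf₂ fun R hR => hausdorffEDist_range_le_of_isCorrespondence fX fY hR) ?_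
  rcases eq_or_ne (hausdorffEDist (range fX) (range fY)) ⊤ with htop | hfin
  · exact htop ▸ le_top
  · exact iInf₂_le_of_le _ (isCorrespondence_edist_le_hausdorffEDist_range fX fY hfin)
      (iSup₂_le fun _ hp => hp)

theorem hausdorff_eq_inf_corr {X Y : Type*} [Fintype X] [Fintype Y]
    [Nonempty X] [Nonempty Y] (fX : X → ℝ) (fY : Y → ℝ) :
    EMetric.hausdorffEdist (Set.range fX) (Set.range fY)
      = ⨅ R ∈ {R : Set (X × Y) | IsCorrespondence R},
          ⨆ p ∈ R, edist (fX p.1) (fY p.2) :=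
  hausdorff_eq_inf_corr_general fX fY
end

section
/- For each n ∈ ℕ, the n-motif-set invariant is 2-Lipschitz: for finite networks X and Y, the Hausdorff distance with respect to the ℓ∞ metric on n×n real matrices between Mn(X) = {(ωX(xi,xj))_{i,j} : x1,…,xn ∈ X} and Mn(Y) = {(ωY(yi,yj))_{i,j} : y1,…,yn ∈ Y} is at most 2 dN(X,Y). -/
open scoped ENNReal
open Function

/-- The `n`-motif set of a network: all `n × n` weight matrices of `n`-tuples. -/
def motifSet {X : Type*} (ωX : X → X → ℝ) (n : ℕ) : Set (Fin n → Fin n → ℝ) :=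
  Set.range fun f : Fin n → X => fun i j => ωX (f i) (f j)

/-! Every correspondence `R` gives a bound `dis R` on the Hausdorff distance of the motif sets:
pairing each point of an `n`-tuple in `X` with an `R`-partner in `Y` changes every entry of the
weight matrix by at most `dis R`, and symmetrically from `Y` to `X`. Taking the infimum over
`R` gives `2 * dN`. -/

section

variable {X Y : Type*} (ωX : X → X → ℝ) (ωY : Y → Y → ℝ)

lemma IsCorrespondence.image_swap {R : Set (X × Y)} (hR : IsCorrespondence R) :
    IsCorrespondence (Prod.swap '' R) :=
  ⟨fun y => (hR.2 y).imp fun x hx => ⟨(x, y), hx, rfl⟩,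
    fun x => (hR.1 x).imp fun y hy => ⟨(x, y), hy, rfl⟩⟩

lemma enorm_sub_le_dis {R : Set (X × Y)} {p q : X × Y} (hp : p ∈ R) (hq : q ∈ R) :
    ‖ωX p.1 q.1 - ωY p.2 q.2‖ₑ ≤ dis ωX ωY R :=
  le_iSup₂_of_le p hp <| le_iSup₂_of_le q hq le_rfl

lemma dis_image_swap (R : Set (X × Y)) : dis ωY ωX (Prod.swap '' R) = dis ωX ωY R := by
  simp only [dis, iSup_image, Prod.fst_swap, Prod.snd_swap, ← enorm_eq_nnnorm,
    enorm_sub_rev (ωY _ _)]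

lemma infEDist_motifSet_le_dis {R : Set (X × Y)} (hR : ∀ x, ∃ y, (x, y) ∈ R) (n : ℕ)
    {A : Fin n → Fin n → ℝ} (hA : A ∈ motifSet ωX n) :
    Metric.infEDist A (motifSet ωY n) ≤ dis ωX ωY R := by
  obtain ⟨f, rfl⟩ := hA
  choose g hg using fun i => hR (f i)
  refine (Metric.infEDist_le_edist_of_mem (Set.mem_range_self g)).trans ?_
  refine edist_pi_le_iff.2 fun i => edist_pi_le_iff.2 fun j => ?_
  rw [edist_eq_enorm_sub]
  exact enorm_sub_le_dis ωX ωY (p := (f i, g i)) (q := (f j, g j)) (hg i) (hg j)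

lemma hausdorffEDist_motifSet_le_dis {R : Set (X × Y)} (hR : IsCorrespondence R) (n : ℕ) :
    Metric.hausdorffEDist (motifSet ωX n) (motifSet ωY n) ≤ dis ωX ωY R := by
  refine Metric.hausdorffEDist_le_of_infEDist
    (fun A hA => infEDist_motifSet_le_dis ωX ωY hR.1 n hA) fun B hB => ?_
  rw [← dis_image_swap]
  exact infEDist_motifSet_le_dis ωY ωX hR.image_swap.1 n hB

end

theorem motifSet_lipschitz_general {X Y : Type*} (ωX : X → X → ℝ) (ωY : Y → Y → ℝ) (n : ℕ) :
    EMetric.hausdorffEdist (motifSet ωX n) (motifSet ωY n) ≤ 2 * dN ωX ωY := by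
  rw [dN, ← mul_assoc, one_div, ENNReal.mul_inv_cancel two_ne_zero ENNReal.ofNat_ne_top,
    one_mul]
  exact le_iInf₂ fun R hR => hausdorffEDist_motifSet_le_dis ωX ωY hR n

theorem motifSet_lipschitz {X Y : Type*} [Fintype X] [Fintype Y]
    [Nonempty X] [Nonempty Y] (ωX : X → X → ℝ) (ωY : Y → Y → ℝ) (n : ℕ) :
    EMetric.hausdorffEdist (motifSet ωX n) (motifSet ωY n) ≤ 2 * dN ωX ωY :=
  motifSet_lipschitz_general ωX ωY n
end
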